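/- arXiv:math/0206068 — 2 statements merged into one kernel-verified Lean document; each statement's English description precedes it below -/
import Mathlib

section
/- Let n ≥ 5 and let u : ℝⁿ → ℝ be a nonnegative C¹ function with u ∈ L^{2♯}(ℝⁿ), where 2♯ = 2n/(n−4). Then, with η_R the rescaled cutoff, ∫_{ℝⁿ} η_R² u^{2♯−1} (x·∇u) dx = −((n−4)/2) ∫_{ℝⁿ} η_R² u^{2♯} dx + ε_R, where ε_R → 0 as R → +∞. -/
open MeasureTheory Real Filter

noncomputable section

/-- `ℝⁿ` as Euclidean space. -/
abbrev En (n : ℕ) := EuclideanSpace ℝ (Fin n)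

/-- Partial derivative in the `i`-th coordinate direction. -/
def pderiv' {n : ℕ} (i : Fin n) (u : En n → ℝ) : En n → ℝ :=
  fun x => fderiv ℝ u x (EuclideanSpace.single i 1)

/-- The geometers' Laplacian `Δu = -∑ ∂²u/∂xᵢ²`. -/
def lap {n : ℕ} (u : En n → ℝ) : En n → ℝ :=
  fun x => -∑ i, pderiv' i (pderiv' i u) x

/-- `|∇u|`, the Euclidean norm of the gradient. -/
def gradNorm {n : ℕ} (u : En n → ℝ) : En n → ℝ :=
  fun x => Real.sqrt (∑ i, (pderiv' i u x) ^ 2)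

/-- A smooth cutoff at unit scale: `0 ≤ η ≤ 1`, `η = 1` on `B₀(1)`, `η = 0` outside `B₀(2)`. -/
def IsCutoff {n : ℕ} (η : En n → ℝ) : Prop :=
  ContDiff ℝ (⊤ : ℕ∞) η ∧ (∀ x, 0 ≤ η x ∧ η x ≤ 1) ∧
    (∀ x, ‖x‖ ≤ 1 → η x = 1) ∧ (∀ x, 2 ≤ ‖x‖ → η x = 0)

/-- Expressing a linear functional applied to `x` via coordinates. -/
lemma sum_coord_apply {n : ℕ} (T : En n →L[ℝ] ℝ) (x : En n) :
    ∑ k, x k * T (EuclideanSpace.single k (1:ℝ)) = T x := by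
  have hb := ((EuclideanSpace.basisFun (Fin n) ℝ).sum_repr x)
  simp only [EuclideanSpace.basisFun_repr,
    EuclideanSpace.basisFun_apply] at hb
  calc ∑ k, x k * T (EuclideanSpace.single k (1:ℝ))
      = ∑ k, T (x k • EuclideanSpace.single k (1:ℝ)) := by
        simp only [T.map_smul, smul_eq_mul]
    _ = T (∑ k, x k • EuclideanSpace.single k (1:ℝ)) := (map_sum T _ _).symm
    _ = T x := by rw [hb]

set_option maxHeartbeats 1000000 in
/-- Identity (4.25): for nonnegative `C¹` `u ∈ L^{2♯}(ℝⁿ)`,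
`∫ η_R² u^{2♯−1}(x·∇u) = −((n−4)/2)∫ η_R² u^{2♯} + ε_R` with `ε_R → 0` as `R → ∞`. -/
theorem cutoff_critical_radial_term (n : ℕ) (hn : 5 ≤ n) (u : En n → ℝ)
    (hu_reg : ContDiff ℝ 1 u) (hu_nonneg : ∀ x, 0 ≤ u x)
    (hu : MemLp u (ENNReal.ofReal (2 * (n : ℝ) / ((n : ℝ) - 4))) volume)
    (η : En n → ℝ) (hη : IsCutoff η) :
    ∃ ε : ℝ → ℝ, Filter.Tendsto ε Filter.atTop (nhds 0) ∧
      ∀ R : ℝ, 0 < R →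
        (∫ x : En n, (η (R⁻¹ • x)) ^ 2 * u x ^ (((n : ℝ) + 4) / ((n : ℝ) - 4)) *
            ∑ k, x k * pderiv' k u x)
          = -(((n : ℝ) - 4) / 2) *
              (∫ x : En n, (η (R⁻¹ • x)) ^ 2 * u x ^ (2 * (n : ℝ) / ((n : ℝ) - 4)))
            + ε R := by
  classical
  obtain ⟨hηs, hη01, hη1, hη0⟩ := hη
  have hn4 : (0:ℝ) < (n:ℝ) - 4 := by
    have : (5:ℝ) ≤ (n:ℝ) := by exact_mod_cast hn
    linarith
  set p : ℝ := 2 * (n:ℝ) / ((n:ℝ) - 4) with hp_def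
  have hp1 : 1 ≤ p := by
    rw [hp_def, le_div_iff₀ hn4]; linarith
  have hp0 : 0 < p := lt_of_lt_of_le one_pos hp1
  have hp' : p ≠ 0 := ne_of_gt hp0
  have hexp : ((n:ℝ) + 4) / ((n:ℝ) - 4) = p - 1 := by
    rw [hp_def]; field_simp; ring
  have hnp2 : (n:ℝ) = p * (((n:ℝ) - 4) / 2) := by
    rw [hp_def]; field_simp
  -- continuity facts for u
  have hu_cont : Continuous u := hu_reg.continuous
  have hu_diff : Differentiable ℝ u := hu_reg.differentiable one_ne_zero
  have hDu_cont : Continuous (fderiv ℝ u) := hu_reg.continuous_fderiv one_ne_zero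
  have hrpow_cont : ∀ q : ℝ, 0 ≤ q → Continuous (fun x => u x ^ q) := by
    intro q hq
    rw [continuous_iff_continuousAt]
    intro x
    exact (Real.continuousAt_rpow_const (u x) q (Or.inr hq)).comp hu_cont.continuousAt
  have hv_cont : Continuous (fun x : En n => u x ^ p) := hrpow_cont p hp0.le
  have hv_int : Integrable (fun x : En n => u x ^ p) := by
    have h0 : ENNReal.ofReal p ≠ 0 := by
      simp [ENNReal.ofReal_eq_zero, not_le, hp0]
    have := hu.integrable_norm_rpow h0 ENNReal.ofReal_ne_top
    refine this.congr (Filter.Eventually.of_forall fun x => ?_)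
    simp [ENNReal.toReal_ofReal hp0.le, Real.norm_eq_abs, abs_of_nonneg (hu_nonneg x)]
  -- facts about η
  have hη_cont : Continuous η := hηs.continuous
  have hη_diff : Differentiable ℝ η := hηs.differentiable (by simp)
  have hDη_cont : Continuous (fderiv ℝ η) := hηs.continuous_fderiv (by simp)
  have hDη_out : ∀ y : En n, 2 < ‖y‖ → fderiv ℝ η y = 0 := by
    intro y hy
    have h1 : η =ᶠ[nhds y] fun _ => (0:ℝ) := by
      filter_upwards [IsOpen.mem_nhds
        (isOpen_lt continuous_const continuous_norm) hy] with z hz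
      exact hη0 z (le_of_lt hz)
    rw [h1.fderiv_eq]
    exact fderiv_const_apply 0
  have hDη_in : ∀ y : En n, ‖y‖ < 1 → fderiv ℝ η y = 0 := by
    intro y hy
    have h1 : η =ᶠ[nhds y] fun _ => (1:ℝ) := by
      filter_upwards [IsOpen.mem_nhds
        (isOpen_lt continuous_norm continuous_const) hy] with z hz
      exact hη1 z (le_of_lt hz)
    rw [h1.fderiv_eq]
    exact fderiv_const_apply 1
  obtain ⟨M, hM⟩ : ∃ M, ∀ y, ‖fderiv ℝ η y‖ ≤ M := by
    have hcs : HasCompactSupport (fderiv ℝ η) := by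
      apply HasCompactSupport.intro (isCompact_closedBall (0 : En n) 2)
      intro y hy
      exact hDη_out y (by simpa [Metric.mem_closedBall, dist_zero_right, not_le] using hy)
    exact hcs.exists_bound_of_continuous hDη_cont
  have hM0 : 0 ≤ M := le_trans (norm_nonneg _) (hM 0)
  have hnorm_smul : ∀ (R : ℝ), 0 < R → ∀ x : En n, ‖R⁻¹ • x‖ = ‖x‖ / R := by
    intro R hR x
    rw [norm_smul, norm_inv, Real.norm_eq_abs, abs_of_pos hR, div_eq_inv_mul]
  -- derivative of the rescaled cutoff squared
  set DηR : ℝ → En n → (En n →L[ℝ] ℝ) := fun R x =>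
    (2 * η (R⁻¹ • x)) •
      ((fderiv ℝ η (R⁻¹ • x)).comp (R⁻¹ • ContinuousLinearMap.id ℝ (En n))) with hDηR_def
  have hηR_deriv : ∀ (R : ℝ) (x : En n),
      HasFDerivAt (fun y : En n => (η (R⁻¹ • y))^2) (DηR R x) x := by
    intro R x
    have h1 : HasFDerivAt (fun y : En n => R⁻¹ • y)
        (R⁻¹ • ContinuousLinearMap.id ℝ (En n)) x := by
      exact (R⁻¹ • ContinuousLinearMap.id ℝ (En n)).hasFDerivAt
    have h2 : HasFDerivAt (fun y : En n => η (R⁻¹ • y))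
        ((fderiv ℝ η (R⁻¹ • x)).comp (R⁻¹ • ContinuousLinearMap.id ℝ (En n))) x :=
      (hη_diff (R⁻¹ • x)).hasFDerivAt.comp x h1
    have h3 := h2.mul h2
    have heq : (fun y : En n => η (R⁻¹ • y) * η (R⁻¹ • y))
        = fun y : En n => (η (R⁻¹ • y))^2 := by
      funext y; ring
    rw [← heq]
    have h5 : DηR R x
        = η (R⁻¹ • x) • ((fderiv ℝ η (R⁻¹ • x)).comp (R⁻¹ • ContinuousLinearMap.id ℝ (En n)))
          + η (R⁻¹ • x) • ((fderiv ℝ η (R⁻¹ • x)).comp (R⁻¹ • ContinuousLinearMap.id ℝ (En n))) := by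
      simp only [hDηR_def]
      rw [two_mul, add_smul]
    rw [h5]
    exact h3
  have hηR_cont : ∀ R : ℝ, Continuous (fun x : En n => (η (R⁻¹ • x))^2) :=
    fun R => (hη_cont.comp (continuous_const_smul _)).pow 2
  have hDηR_cont : ∀ R : ℝ, Continuous (fun x => DηR R x) := by
    intro R
    apply Continuous.smul (f := fun x => 2 * η (R⁻¹ • x))
      (g := fun x => (fderiv ℝ η (R⁻¹ • x)).comp (R⁻¹ • ContinuousLinearMap.id ℝ (En n)))
    · exact continuous_const.mul (hη_cont.comp (continuous_const_smul _))
    · exact (hDη_cont.comp (continuous_const_smul _)).clm_comp continuous_const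
  have hηR_zero : ∀ (R : ℝ), 0 < R → ∀ x : En n, 2 * R < ‖x‖ → η (R⁻¹ • x) = 0 := by
    intro R hR x hx
    apply hη0
    rw [hnorm_smul R hR, le_div_iff₀ hR]; linarith
  have hDηR_zero : ∀ (R : ℝ), 0 < R → ∀ x : En n, 2 * R < ‖x‖ → DηR R x = 0 := by
    intro R hR x hx
    rw [hDηR_def]
    simp [hηR_zero R hR x hx]
  have hint : ∀ (R : ℝ) (f : En n → ℝ), Continuous f → (∀ x, 2 * R < ‖x‖ → f x = 0) →
      Integrable f (volume : Measure (En n)) := by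
    intro R f hf h0
    exact hf.integrable_of_hasCompactSupport (HasCompactSupport.intro
      (isCompact_closedBall (0 : En n) (2*R)) (fun x hx => h0 x (by
        simpa [Metric.mem_closedBall, dist_zero_right, not_le] using hx)))
  -- derivative of u^p
  have hV : ∀ x : En n, HasFDerivAt (fun y => u y ^ p)
      ((p * u x ^ (p-1)) • fderiv ℝ u x) x :=
    fun x => (hu_diff x).hasFDerivAt.rpow_const (Or.inr hp1)
  -- the key integration-by-parts identity
  have key : ∀ R : ℝ, 0 < R →
      p * (∫ x : En n, (η (R⁻¹ • x)) ^ 2 * u x ^ (((n:ℝ)+4)/((n:ℝ)-4)) *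
          ∑ k, x k * pderiv' k u x)
      = -((n:ℝ) * (∫ x : En n, (η (R⁻¹ • x)) ^ 2 * u x ^ p))
        - (∫ x : En n, (DηR R x x) * u x ^ p) := by
    intro R hR
    -- integrability of all integrands
    have hup1_cont : Continuous (fun x : En n => u x ^ (p-1)) :=
      hrpow_cont (p-1) (by linarith)
    have hi1 : ∀ k : Fin n, Integrable (fun x : En n =>
        ((η (R⁻¹ • x))^2 * x k) * ((p * u x ^ (p-1)) * fderiv ℝ u x (EuclideanSpace.single k 1))) := by
      intro k
      apply hint R
      · exact ((hηR_cont R).mul ((EuclideanSpace.proj (𝕜 := ℝ) k).continuous)).mul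
          ((continuous_const.mul hup1_cont).mul (hDu_cont.clm_apply continuous_const))
      · intro x hx
        rw [hηR_zero R hR x hx]
        simp
    have hi2 : ∀ k : Fin n, Integrable (fun x : En n =>
        ((η (R⁻¹ • x))^2 + x k * DηR R x (EuclideanSpace.single k 1)) * u x ^ p) := by
      intro k
      apply hint R
      · exact (((hηR_cont R)).add (((EuclideanSpace.proj (𝕜 := ℝ) k).continuous).mul
          ((hDηR_cont R).clm_apply continuous_const))).mul hv_cont
      · intro x hx
        rw [hηR_zero R hR x hx, hDηR_zero R hR x hx]
        simp
    have hi3 : ∀ k : Fin n, Integrable (fun x : En n =>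
        ((η (R⁻¹ • x))^2 * x k) * u x ^ p) := by
      intro k
      apply hint R
      · exact ((hηR_cont R).mul ((EuclideanSpace.proj (𝕜 := ℝ) k).continuous)).mul hv_cont
      · intro x hx
        rw [hηR_zero R hR x hx]
        simp
    -- per-coordinate integration by parts
    have hIBP : ∀ k : Fin n,
        ∫ x : En n, ((η (R⁻¹ • x))^2 * x k) *
            ((p * u x ^ (p-1)) * fderiv ℝ u x (EuclideanSpace.single k 1))
        = - ∫ x : En n, ((η (R⁻¹ • x))^2 + x k * DηR R x (EuclideanSpace.single k 1)) * u x ^ p := by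
      intro k
      have hf : ∀ x : En n, HasFDerivAt (fun y : En n => (η (R⁻¹ • y))^2 * y k)
          (((η (R⁻¹ • x))^2) • (EuclideanSpace.proj (𝕜 := ℝ) k) + (x k) • DηR R x) x :=
        fun x => (hηR_deriv R x).mul ((EuclideanSpace.proj (𝕜 := ℝ) k).hasFDerivAt)
      have h := integral_bilinear_hasFDerivAt_right_eq_neg_left_of_integrable
        (μ := (volume : Measure (En n))) (B := ContinuousLinearMap.mul ℝ ℝ)
        (v := EuclideanSpace.single k (1:ℝ))
        (f := fun y : En n => (η (R⁻¹ • y))^2 * y k)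
        (g := fun y : En n => u y ^ p)
        ?_ ?_ ?_ (fun x _ => hf x) (fun x _ => hV x)
      · simpa only [ContinuousLinearMap.mul_apply', ContinuousLinearMap.add_apply,
          ContinuousLinearMap.smul_apply, smul_eq_mul, PiLp.proj_apply,
          EuclideanSpace.single_apply, if_true, mul_one] using h
      · -- Integrable B (f' x v) (g x)
        simp only [ContinuousLinearMap.mul_apply', ContinuousLinearMap.add_apply,
          ContinuousLinearMap.smul_apply, smul_eq_mul, PiLp.proj_apply,
          EuclideanSpace.single_apply, if_true, mul_one]
        exact hi2 k
      · -- Integrable B (f x) (g' x v)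
        simp only [ContinuousLinearMap.mul_apply', ContinuousLinearMap.smul_apply, smul_eq_mul]
        exact hi1 k
      · -- Integrable B (f x) (g x)
        simp only [ContinuousLinearMap.mul_apply']
        exact hi3 k
    -- now sum over k
    have hL : p * (∫ x : En n, (η (R⁻¹ • x)) ^ 2 * u x ^ (((n:ℝ)+4)/((n:ℝ)-4)) *
          ∑ k, x k * pderiv' k u x)
        = ∑ k, ∫ x : En n, ((η (R⁻¹ • x))^2 * x k) *
            ((p * u x ^ (p-1)) * fderiv ℝ u x (EuclideanSpace.single k 1)) := by
      rw [← integral_finset_sum _ (fun k _ => hi1 k), ← integral_const_mul]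
      apply integral_congr_ae
      apply Filter.Eventually.of_forall
      intro x
      simp only [pderiv', hexp, Finset.mul_sum]
      exact Finset.sum_congr rfl fun k _ => by ring
    have hR2 : ∑ k, ∫ x : En n,
          ((η (R⁻¹ • x))^2 + x k * DηR R x (EuclideanSpace.single k 1)) * u x ^ p
        = (n:ℝ) * (∫ x : En n, (η (R⁻¹ • x)) ^ 2 * u x ^ p)
          + ∫ x : En n, (DηR R x x) * u x ^ p := by
      rw [← integral_finset_sum _ (fun k _ => hi2 k)]
      have hsplit : ∀ x : En n,
          (∑ k, ((η (R⁻¹ • x))^2 + x k * DηR R x (EuclideanSpace.single k 1)) * u x ^ p)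
          = (n:ℝ) * ((η (R⁻¹ • x))^2 * u x ^ p) + (DηR R x x) * u x ^ p := by
        intro x
        have h1 : (∑ k : Fin n, ((η (R⁻¹ • x))^2 + x k * DηR R x (EuclideanSpace.single k 1)) * u x ^ p)
            = (∑ _k : Fin n, (η (R⁻¹ • x))^2 * u x ^ p)
              + (∑ k, x k * DηR R x (EuclideanSpace.single k 1)) * u x ^ p := by
          rw [Finset.sum_mul, ← Finset.sum_add_distrib]
          exact Finset.sum_congr rfl fun k _ => by ring
        rw [h1, sum_coord_apply (DηR R x) x, Finset.sum_const, Finset.card_univ,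
          Fintype.card_fin, nsmul_eq_mul]
      have ha : Integrable (fun x : En n => (n:ℝ) * ((η (R⁻¹ • x))^2 * u x ^ p)) := by
        apply hint R
        · exact continuous_const.mul ((hηR_cont R).mul hv_cont)
        · intro x hx; rw [hηR_zero R hR x hx]; simp
      have hb : Integrable (fun x : En n => (DηR R x x) * u x ^ p) := by
        apply hint R
        · exact ((hDηR_cont R).clm_apply continuous_id).mul hv_cont
        · intro x hx; rw [hDηR_zero R hR x hx]; simp
      rw [← integral_const_mul, ← integral_add ha hb]
      apply integral_congr_ae
      exact Filter.Eventually.of_forall hsplit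
    rw [hL]
    rw [Finset.sum_congr rfl fun k _ => hIBP k, Finset.sum_neg_distrib, hR2]
    ring
  -- definition of the error term
  refine ⟨fun R => -(1/p) * ∫ x : En n, (DηR R x x) * u x ^ p, ?_, ?_⟩
  · -- the error tends to zero
    have hG : Tendsto (fun R : ℝ => ∫ x : En n, (DηR R x x) * u x ^ p) atTop (nhds 0) := by
      have h0 : (0:ℝ) = ∫ _x : En n, (0:ℝ) := by simp
      rw [h0]
      apply tendsto_integral_filter_of_dominated_convergence
        (bound := fun x : En n => (2 * (2 * M)) * u x ^ p)
      · exact Filter.Eventually.of_forall fun R =>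
          (((hDηR_cont R).clm_apply continuous_id).mul hv_cont).aestronglyMeasurable
      · filter_upwards [eventually_ge_atTop (1:ℝ)] with R hR1
        apply Filter.Eventually.of_forall
        intro x
        have hR : 0 < R := lt_of_lt_of_le one_pos hR1
        have hup : 0 ≤ u x ^ p := Real.rpow_nonneg (hu_nonneg x) p
        rw [Real.norm_eq_abs, abs_mul, abs_of_nonneg hup]
        apply mul_le_mul_of_nonneg_right _ hup
        have hDapp : DηR R x x = (2 * η (R⁻¹ • x)) * (fderiv ℝ η (R⁻¹ • x) (R⁻¹ • x)) := by
          simp [hDηR_def]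
        rw [hDapp, abs_mul]
        have h1 : |2 * η (R⁻¹ • x)| ≤ 2 := by
          have h01 := hη01 (R⁻¹ • x)
          rw [abs_of_nonneg (by linarith [h01.1])]
          linarith [h01.2]
        have h2 : |fderiv ℝ η (R⁻¹ • x) (R⁻¹ • x)| ≤ 2 * M := by
          rcases le_or_gt (‖x‖) (2*R) with h | h
          · calc |fderiv ℝ η (R⁻¹ • x) (R⁻¹ • x)|
                ≤ ‖fderiv ℝ η (R⁻¹ • x)‖ * ‖R⁻¹ • x‖ :=
                  (fderiv ℝ η (R⁻¹ • x)).le_opNorm _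
              _ ≤ M * 2 := by
                  apply mul_le_mul (hM _) ?_ (norm_nonneg _) hM0
                  rw [hnorm_smul R hR, div_le_iff₀ hR]; linarith
              _ = 2 * M := mul_comm _ _
          · rw [hDη_out _ (by rw [hnorm_smul R hR, lt_div_iff₀ hR]; linarith)]
            simpa using by positivity
        exact mul_le_mul h1 h2 (abs_nonneg _) (by norm_num)
      · exact hv_int.const_mul _
      · apply Filter.Eventually.of_forall
        intro x
        apply Tendsto.congr' _ tendsto_const_nhds
        filter_upwards [eventually_gt_atTop (max ‖x‖ 1)] with R hR'
        have hR : 0 < R := lt_of_lt_of_le one_pos (le_of_lt (lt_of_le_of_lt (le_max_right _ _) hR'))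
        have hxR : ‖x‖ < R := lt_of_le_of_lt (le_max_left _ _) hR'
        have hz : fderiv ℝ η (R⁻¹ • x) = 0 := by
          apply hDη_in
          rw [hnorm_smul R hR, div_lt_one hR]
          exact hxR
        simp [hDηR_def, hz]
    simpa using hG.const_mul (-(1/p))
  · -- the identity
    intro R hR
    have h1 := key R hR
    set I := ∫ x : En n, (η (R⁻¹ • x)) ^ 2 * u x ^ (((n:ℝ)+4)/((n:ℝ)-4)) *
        ∑ k, x k * pderiv' k u x with hI
    set J := ∫ x : En n, (η (R⁻¹ • x)) ^ 2 * u x ^ p with hJ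
    set K := ∫ x : En n, (DηR R x x) * u x ^ p with hK
    have hgoal : I = -(((n:ℝ) - 4) / 2) * J + -(1/p) * K := by
      have hIval : I = (-((n:ℝ) * J) - K) / p := by
        rw [eq_div_iff hp']
        linear_combination h1
      have hn4' : ((n:ℝ) - 4) ≠ 0 := ne_of_gt hn4
      have hn0 : (n:ℝ) ≠ 0 := by intro h; rw [h] at hn4; norm_num at hn4
      rw [hIval, hp_def]
      field_simp
      ring
    exact hgoal
end
end

section
/- Let n ≥ 1 and let u : ℝⁿ → ℝ be a C² function with |∇u| ∈ L²(ℝⁿ). Then, with η_R the rescaled cutoff and Δ the geometers' Laplacian, ∫_{ℝⁿ} η_R² (Δu)(x·∇u) dx = −((n−2)/2) ∫_{ℝⁿ} η_R² |∇u|² dx + ε_R, where ε_R → 0 as R → +∞. -/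
open MeasureTheory Real Filter

noncomputable section

variable {n : ℕ}

lemma contDiff_pderiv {m : ℕ} {f : En n → ℝ} (hf : ContDiff ℝ (m+1 : ℕ) f) (i : Fin n) :
    ContDiff ℝ (m : ℕ) (pderiv' i f) :=
  (hf.fderiv_right (by norm_cast)).clm_apply contDiff_const

lemma integral_fderiv_apply_eq_zero {f : En n → ℝ} (hf : ContDiff ℝ 1 f)
    (hfc : HasCompactSupport f) (v : En n) :
    ∫ x : En n, fderiv ℝ f x v = 0 := by
  obtain ⟨C, hC⟩ := hf.lipschitzWith_of_hasCompactSupport hfc one_ne_zero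
  have h1 : LipschitzWith 0 (fun _ : En n => (1:ℝ)) := LipschitzWith.const 1
  have h2 := h1.integral_lineDeriv_mul_eq (μ := volume) hC hfc (-v)
  have h3 : ∀ x : En n, lineDeriv ℝ (fun _ : En n => (1:ℝ)) x (-v) = 0 := fun x => by
    simp [lineDeriv, deriv_const]
  have h4 : ∀ x : En n, lineDeriv ℝ f x (- -v) = fderiv ℝ f x v := fun x => by
    rw [neg_neg, (hf.differentiable one_ne_zero x).lineDeriv_eq_fderiv]
  simp only [h3, h4, zero_mul, mul_one, integral_zero] at h2
  exact h2.symm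

lemma pderiv_mul {f g : En n → ℝ} {x : En n} (hf : DifferentiableAt ℝ f x)
    (hg : DifferentiableAt ℝ g x) (i : Fin n) :
    pderiv' i (fun y => f y * g y) x = pderiv' i f x * g x + f x * pderiv' i g x := by
  unfold pderiv'
  rw [fderiv_fun_mul hf hg]
  simp only [ContinuousLinearMap.add_apply, ContinuousLinearMap.smul_apply, smul_eq_mul]
  ring

lemma pderiv_sum {ι : Type*} {s : Finset ι} {f : ι → En n → ℝ} {x : En n}
    (hf : ∀ j ∈ s, DifferentiableAt ℝ (f j) x) (i : Fin n) :
    pderiv' i (fun y => ∑ j ∈ s, f j y) x = ∑ j ∈ s, pderiv' i (f j) x := by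
  unfold pderiv'
  rw [fderiv_fun_sum hf]
  simp

lemma pderiv_sub {f g : En n → ℝ} {x : En n} (hf : DifferentiableAt ℝ f x)
    (hg : DifferentiableAt ℝ g x) (i : Fin n) :
    pderiv' i (fun y => f y - g y) x = pderiv' i f x - pderiv' i g x := by
  unfold pderiv'; rw [fderiv_fun_sub hf hg]; simp

lemma pderiv_const_mul {f : En n → ℝ} {x : En n} (hf : DifferentiableAt ℝ f x) (c : ℝ) (i : Fin n) :
    pderiv' i (fun y => c * f y) x = c * pderiv' i f x := by
  unfold pderiv'; rw [fderiv_const_mul hf]; simp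

lemma pderiv_coord (i k : Fin n) (x : En n) :
    pderiv' i (fun y : En n => y k) x = if k = i then 1 else 0 := by
  have : (fun y : En n => y k) = fun y => (EuclideanSpace.proj (𝕜 := ℝ) k) y := rfl
  unfold pderiv'
  rw [this, (EuclideanSpace.proj (𝕜 := ℝ) k).fderiv]
  simp [EuclideanSpace.single_apply]

lemma pderiv_pderiv_eq {u : En n → ℝ} (hu : ContDiff ℝ 2 u) (i k : Fin n) (x : En n) :
    pderiv' i (pderiv' k u) x
      = fderiv ℝ (fderiv ℝ u) x (EuclideanSpace.single i 1) (EuclideanSpace.single k 1) := by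
  have hd : DifferentiableAt ℝ (fderiv ℝ u) x :=
    ((hu.fderiv_right (m := 1) (by norm_num)).differentiable one_ne_zero) x
  unfold pderiv'
  rw [fderiv_clm_apply hd (differentiableAt_const _)]
  simp

lemma pderiv_symm {u : En n → ℝ} (hu : ContDiff ℝ 2 u) (i k : Fin n) (x : En n) :
    pderiv' i (pderiv' k u) x = pderiv' k (pderiv' i u) x := by
  rw [pderiv_pderiv_eq hu, pderiv_pderiv_eq hu]
  exact (hu.contDiffAt.isSymmSndFDerivAt (by norm_num)).eq _ _

def Vf (u : En n → ℝ) : En n → ℝ := fun x => ∑ k, x k * pderiv' k u x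
def Sf (u : En n → ℝ) : En n → ℝ := fun x => ∑ i, (pderiv' i u x) ^ 2
def Ff (u : En n → ℝ) (i : Fin n) : En n → ℝ :=
  fun x => pderiv' i u x * Vf u x - (1/2) * (x i * Sf u x)

lemma contDiff_coord (k : Fin n) {m : ℕ∞} : ContDiff ℝ m (fun y : En n => y k) :=
  (EuclideanSpace.proj (𝕜 := ℝ) k).contDiff

section calc1
variable {u : En n → ℝ} (hu : ContDiff ℝ 2 u)
include hu

lemma hu1 (i : Fin n) : ContDiff ℝ 1 (pderiv' i u) :=
  contDiff_pderiv (m := 1) (by exact_mod_cast hu) i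

lemma contDiff_Vf : ContDiff ℝ 1 (Vf u) :=
  ContDiff.sum fun k _ => (contDiff_coord k).mul (hu1 hu k)

lemma contDiff_Sf : ContDiff ℝ 1 (Sf u) :=
  ContDiff.sum fun k _ => (hu1 hu k).pow 2

lemma contDiff_Ff (i : Fin n) : ContDiff ℝ 1 (Ff u i) :=
  ((hu1 hu i).mul (contDiff_Vf hu)).sub
    (contDiff_const.mul ((contDiff_coord i).mul (contDiff_Sf hu)))

lemma pderiv_Vf (i : Fin n) (x : En n) :
    pderiv' i (Vf u) x = pderiv' i u x + ∑ k, x k * pderiv' i (pderiv' k u) x := by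
  have h1 : Vf u = fun y => ∑ k, (fun y : En n => y k * pderiv' k u y) y := rfl
  rw [h1, pderiv_sum (fun k _ => ((contDiff_coord k).differentiable one_ne_zero x).fun_mul
    (((hu1 hu k).differentiable one_ne_zero) x))]
  have h2 : ∀ k, pderiv' i (fun y : En n => y k * pderiv' k u y) x
      = (if k = i then (1:ℝ) else 0) * pderiv' k u x + x k * pderiv' i (pderiv' k u) x := by
    intro k
    rw [pderiv_mul ((contDiff_coord k).differentiable one_ne_zero x)
      (((hu1 hu k).differentiable one_ne_zero) x), pderiv_coord]
  simp only [h2, Finset.sum_add_distrib, ite_mul, zero_mul]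
  simp [Finset.sum_ite_eq']

lemma pderiv_Sf (i : Fin n) (x : En n) :
    pderiv' i (Sf u) x = ∑ k, 2 * pderiv' k u x * pderiv' i (pderiv' k u) x := by
  have h1 : Sf u = fun y => ∑ k, (fun y => pderiv' k u y * pderiv' k u y) y := by
    funext y; simp [Sf, pow_two]
  rw [h1, pderiv_sum (fun k _ => (((hu1 hu k).differentiable one_ne_zero) x).fun_mul
    (((hu1 hu k).differentiable one_ne_zero) x))]
  refine Finset.sum_congr rfl fun k _ => ?_
  rw [pderiv_mul (((hu1 hu k).differentiable one_ne_zero) x) (((hu1 hu k).differentiable one_ne_zero) x)]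
  ring

lemma pderiv_Ff (i : Fin n) (x : En n) :
    pderiv' i (Ff u i) x =
      (pderiv' i (pderiv' i u) x * Vf u x
        + pderiv' i u x * (pderiv' i u x + ∑ k, x k * pderiv' i (pderiv' k u) x))
      - (1/2) * (Sf u x + x i * (∑ k, 2 * pderiv' k u x * pderiv' i (pderiv' k u) x)) := by
  have hdm : DifferentiableAt ℝ (fun y => pderiv' i u y * Vf u y) x :=
    (((hu1 hu i).differentiable one_ne_zero) x).mul ((contDiff_Vf hu).differentiable one_ne_zero x)
  have hdc : DifferentiableAt ℝ (fun y : En n => y i * Sf u y) x :=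
    ((contDiff_coord i).differentiable one_ne_zero x).mul ((contDiff_Sf hu).differentiable one_ne_zero x)
  have h1 : Ff u i = fun y =>
      (fun y => pderiv' i u y * Vf u y) y - (fun y => (1/2) * ((fun y : En n => y i * Sf u y) y)) y := rfl
  rw [h1, pderiv_sub hdm (hdc.const_mul _), pderiv_const_mul hdc,
    pderiv_mul (((hu1 hu i).differentiable one_ne_zero) x) ((contDiff_Vf hu).differentiable one_ne_zero x),
    pderiv_mul ((contDiff_coord i).differentiable one_ne_zero x)
      ((contDiff_Sf hu).differentiable one_ne_zero x),
    pderiv_Vf hu, pderiv_Sf hu, pderiv_coord]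
  simp

lemma sum_pderiv_Ff (x : En n) :
    ∑ i, pderiv' i (Ff u i) x = -(lap u x * Vf u x) + (1 - (n:ℝ)/2) * Sf u x := by
  have key : ∑ i, pderiv' i u x * (∑ k, x k * pderiv' i (pderiv' k u) x)
      = ∑ i, x i * (∑ k, pderiv' k u x * pderiv' i (pderiv' k u) x) := by
    simp_rw [Finset.mul_sum]
    rw [Finset.sum_comm]
    refine Finset.sum_congr rfl fun i _ => Finset.sum_congr rfl fun k _ => ?_
    rw [pderiv_symm hu k i]
    ring
  simp only [pderiv_Ff hu]
  rw [Finset.sum_sub_distrib]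
  simp only [mul_add, Finset.sum_add_distrib, key]
  have hxi : ∀ i : Fin n, x i * (∑ k, 2 * pderiv' k u x * pderiv' i (pderiv' k u) x)
      = 2 * (x i * ∑ k, pderiv' k u x * pderiv' i (pderiv' k u) x) := by
    intro i; rw [Finset.mul_sum, Finset.mul_sum, Finset.mul_sum]
    exact Finset.sum_congr rfl fun k _ => by ring
  simp only [hxi, lap, Sf, Vf]
  have e3 : ∑ i : Fin n, (1/2:ℝ) * (2 * (x i * ∑ k, pderiv' k u x * pderiv' i (pderiv' k u) x))
      = ∑ i, x i * ∑ k, pderiv' k u x * pderiv' i (pderiv' k u) x :=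
    Finset.sum_congr rfl fun i _ => by ring
  have e1 : ∑ i : Fin n, pderiv' i u x * pderiv' i u x = ∑ i, (pderiv' i u x)^2 :=
    Finset.sum_congr rfl fun i _ => (pow_two _).symm
  rw [e3, e1, Finset.sum_const, Finset.card_univ, Fintype.card_fin, nsmul_eq_mul, ← Finset.sum_mul]
  ring
end calc1

def wR (η : En n → ℝ) (R : ℝ) : En n → ℝ := fun x => (η (R⁻¹ • x)) ^ 2

lemma continuous_pderiv {f : En n → ℝ} (hf : ContDiff ℝ 1 f) (i : Fin n) :
    Continuous (pderiv' i f) :=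
  (contDiff_pderiv (m := 0) (by exact_mod_cast hf) i).continuous

lemma contDiff_wR (hη1 : ContDiff ℝ (⊤ : ℕ∞) η) (R : ℝ) : ContDiff ℝ 2 (wR η R) :=
  ((hη1.of_le (WithTop.coe_le_coe.mpr le_top)).comp (contDiff_id.const_smul R⁻¹)).pow 2

lemma hasCompactSupport_wR (hη4 : ∀ x : En n, 2 ≤ ‖x‖ → η x = 0) {R : ℝ} (hR : 0 < R) :
    HasCompactSupport (wR η R) := by
  apply HasCompactSupport.intro (isCompact_closedBall (0 : En n) (2*R))
  intro x hx
  simp only [Metric.mem_closedBall, dist_zero_right, not_le] at hx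
  have : (2:ℝ) ≤ ‖R⁻¹ • x‖ := by
    rw [norm_smul, norm_inv, Real.norm_eq_abs, abs_of_pos hR]
    rw [le_inv_mul_iff₀ hR]
    linarith
  simp [wR, hη4 _ this]

lemma integral_identity {η u : En n → ℝ} (hη : IsCutoff η) (hu : ContDiff ℝ 2 u)
    {R : ℝ} (hR : 0 < R) :
    ∫ x : En n, wR η R x * lap u x * Vf u x
      = -(((n:ℝ) - 2)/2) * (∫ x : En n, wR η R x * Sf u x)
        + ∫ x : En n, ∑ i, pderiv' i (wR η R) x * Ff u i x := by
  obtain ⟨hη1, hη2, hη3, hη4⟩ := hη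
  set w := wR η R with hw
  have hwc : ContDiff ℝ 2 w := contDiff_wR hη1 R
  have hwc1 : ContDiff ℝ 1 w := hwc.of_le one_le_two
  have hwcs : HasCompactSupport w := hasCompactSupport_wR hη4 hR
  have hlapc : Continuous (lap u) :=
    (continuous_finset_sum _ fun i _ => continuous_pderiv (hu1 hu i) i).neg
  have contV : Continuous (Vf u) := (contDiff_Vf hu).continuous
  have contS : Continuous (Sf u) := (contDiff_Sf hu).continuous
  have contF : ∀ i, Continuous (Ff u i) := fun i => (contDiff_Ff hu i).continuous
  have step1 : ∀ i : Fin n, ∫ x : En n, pderiv' i (fun y => w y * Ff u i y) x = 0 := fun i =>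
    integral_fderiv_apply_eq_zero (hwc1.mul (contDiff_Ff hu i)) hwcs.mul_right _
  have hdw : ∀ x, DifferentiableAt ℝ w x := fun x => (hwc1.differentiable one_ne_zero) x
  have hdF : ∀ i x, DifferentiableAt ℝ (Ff u i) x := fun i x =>
    ((contDiff_Ff hu i).differentiable one_ne_zero) x
  have hcont_pw : ∀ i, Continuous (pderiv' i w) := fun i => continuous_pderiv hwc1 i
  have hcs_pw : ∀ i : Fin n, HasCompactSupport (pderiv' i w) := fun i =>
    hwcs.fderiv_apply ℝ (EuclideanSpace.single i 1)
  have hint1 : ∀ i, Integrable (fun x => pderiv' i w x * Ff u i x) := fun i =>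
    ((hcont_pw i).mul (contF i)).integrable_of_hasCompactSupport (hcs_pw i).mul_right
  have hint2 : ∀ i, Integrable (fun x => w x * pderiv' i (Ff u i) x) := fun i =>
    (hwc1.continuous.mul
      (continuous_pderiv (contDiff_Ff hu i) i)).integrable_of_hasCompactSupport hwcs.mul_right
  have intA : Integrable (fun x => w x * lap u x * Vf u x) :=
    ((hwc1.continuous.mul hlapc).mul contV).integrable_of_hasCompactSupport
      hwcs.mul_right.mul_right
  have intB : Integrable (fun x => w x * Sf u x) :=
    (hwc1.continuous.mul contS).integrable_of_hasCompactSupport hwcs.mul_right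
  have e0 : (0:ℝ) = ∑ i : Fin n, ∫ x : En n, pderiv' i (fun y => w y * Ff u i y) x := by
    simp [step1]
  have expand : ∀ (i : Fin n) x, pderiv' i (fun y => w y * Ff u i y) x
      = pderiv' i w x * Ff u i x + w x * pderiv' i (Ff u i) x := fun i x =>
    pderiv_mul (hdw x) (hdF i x) i
  have e1 : ∀ i : Fin n, ∫ x : En n, pderiv' i (fun y => w y * Ff u i y) x
      = (∫ x : En n, pderiv' i w x * Ff u i x) + ∫ x : En n, w x * pderiv' i (Ff u i) x := by
    intro i
    simp_rw [expand i]
    exact integral_add (hint1 i) (hint2 i)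
  simp_rw [e1, Finset.sum_add_distrib] at e0
  rw [← integral_finset_sum _ (fun i _ => hint1 i), ← integral_finset_sum _ (fun i _ => hint2 i)]
    at e0
  have e2 : (∫ x : En n, ∑ i, w x * pderiv' i (Ff u i) x)
      = -(∫ x : En n, w x * lap u x * Vf u x)
        + (1 - (n:ℝ)/2) * ∫ x : En n, w x * Sf u x := by
    have ptw : ∀ x : En n, ∑ i, w x * pderiv' i (Ff u i) x
        = -(w x * lap u x * Vf u x) + (1 - (n:ℝ)/2) * (w x * Sf u x) := by
      intro x
      rw [← Finset.mul_sum, sum_pderiv_Ff hu]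
      ring
    have intA' : Integrable (fun x => -(w x * lap u x * Vf u x)) volume := intA.neg
    have intB' : Integrable (fun x => (1 - (n:ℝ)/2) * (w x * Sf u x)) volume := intB.const_mul _
    simp_rw [ptw]
    rw [integral_add intA' intB', integral_neg, integral_const_mul]
  rw [e2] at e0
  have : ∫ x : En n, w x * lap u x * Vf u x
      = (1 - (n:ℝ)/2) * (∫ x : En n, w x * Sf u x)
        + ∫ x : En n, ∑ i, pderiv' i w x * Ff u i x := by linarith
  rw [this]
  ring_nf

lemma abs_coord_le_norm (x : En n) (k : Fin n) : |x k| ≤ ‖x‖ := by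
  rw [EuclideanSpace.norm_eq, ← Real.sqrt_sq_eq_abs]
  apply Real.sqrt_le_sqrt
  have := Finset.single_le_sum (f := fun i => ‖x i‖ ^ 2)
    (fun i _ => sq_nonneg _) (Finset.mem_univ k)
  simpa [Real.norm_eq_abs, sq_abs] using this

lemma pderiv_wR {η : En n → ℝ} (hη1 : ContDiff ℝ (⊤ : ℕ∞) η) (R : ℝ) (i : Fin n) (x : En n) :
    pderiv' i (wR η R) x
      = 2 * η (R⁻¹ • x) * (R⁻¹ * fderiv ℝ η (R⁻¹ • x) (EuclideanSpace.single i 1)) := by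
  have hg : (wR η R) = fun y => (fun y : En n => η (R⁻¹ • y)) y * (fun y : En n => η (R⁻¹ • y)) y := by
    funext y; simp [wR, pow_two]
  have hgd : ∀ y : En n, DifferentiableAt ℝ (fun y : En n => η (R⁻¹ • y)) y := fun y =>
    ((hη1.differentiable (by simp)).comp (differentiable_id.const_smul R⁻¹)) y
  have hs : HasFDerivAt (fun y : En n => R⁻¹ • y) (R⁻¹ • ContinuousLinearMap.id ℝ (En n)) x :=
    (hasFDerivAt_id x).const_smul R⁻¹
  have hc : HasFDerivAt (fun y : En n => η (R⁻¹ • y))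
      ((fderiv ℝ η (R⁻¹ • x)).comp (R⁻¹ • ContinuousLinearMap.id ℝ (En n))) x :=
    ((hη1.differentiable (by simp) (R⁻¹ • x)).hasFDerivAt).comp x hs
  have hkey : pderiv' i (fun y : En n => η (R⁻¹ • y)) x
      = R⁻¹ * fderiv ℝ η (R⁻¹ • x) (EuclideanSpace.single i 1) := by
    show fderiv ℝ (fun y : En n => η (R⁻¹ • y)) x (EuclideanSpace.single i 1) = _
    rw [hc.fderiv]
    simp only [ContinuousLinearMap.comp_apply, ContinuousLinearMap.smul_apply,
      ContinuousLinearMap.id_apply, _root_.map_smul, smul_eq_mul]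
  rw [hg, pderiv_mul (hgd x) (hgd x) i, hkey]
  ring

lemma hfun_bound {η u : En n → ℝ} (hη : IsCutoff η) (hu : ContDiff ℝ 2 u) {M : ℝ}
    (hM : ∀ y, ‖fderiv ℝ η y‖ ≤ M) {R : ℝ} (hR : 0 < R) (x : En n) :
    |∑ i, pderiv' i (wR η R) x * Ff u i x| ≤ ((n:ℝ) * (4*M*((n:ℝ)+1))) * Sf u x := by
  have hS0 : 0 ≤ Sf u x := Finset.sum_nonneg fun i _ => sq_nonneg _
  have hM0 : 0 ≤ M := le_trans (norm_nonneg _) (hM 0)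
  set S := Sf u x with hSdef
  have hpi : ∀ k : Fin n, |pderiv' k u x| ≤ Real.sqrt S := fun k => by
    rw [← Real.sqrt_sq_eq_abs]
    exact Real.sqrt_le_sqrt (Finset.single_le_sum
      (f := fun j : Fin n => (pderiv' j u x) ^ 2) (fun j _ => sq_nonneg _) (Finset.mem_univ k))
  have hsq : Real.sqrt S * Real.sqrt S = S := Real.mul_self_sqrt hS0
  have hV : |Vf u x| ≤ (n:ℝ) * ‖x‖ * Real.sqrt S := by
    calc |Vf u x| ≤ ∑ k, |x k * pderiv' k u x| := Finset.abs_sum_le_sum_abs _ _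
    _ ≤ ∑ _k : Fin n, ‖x‖ * Real.sqrt S := Finset.sum_le_sum fun k _ => by
        rw [abs_mul]
        exact mul_le_mul (abs_coord_le_norm x k) (hpi k) (abs_nonneg _) (norm_nonneg _)
    _ = (n:ℝ) * ‖x‖ * Real.sqrt S := by
        rw [Finset.sum_const, Finset.card_univ, Fintype.card_fin, nsmul_eq_mul]; ring
  have hF : ∀ i : Fin n, |Ff u i x| ≤ ((n:ℝ)+1) * ‖x‖ * S := by
    intro i
    have h1 : |pderiv' i u x * Vf u x| ≤ (n:ℝ) * ‖x‖ * S := by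
      rw [abs_mul]
      calc |pderiv' i u x| * |Vf u x| ≤ Real.sqrt S * ((n:ℝ) * ‖x‖ * Real.sqrt S) :=
        mul_le_mul (hpi i) hV (abs_nonneg _) (Real.sqrt_nonneg _)
      _ = (n:ℝ) * ‖x‖ * (Real.sqrt S * Real.sqrt S) := by ring
      _ = (n:ℝ) * ‖x‖ * S := by rw [hsq]
    have h2 : |(1/2 : ℝ) * (x i * S)| ≤ (1/2) * (‖x‖ * S) := by
      rw [abs_mul, abs_mul, abs_of_nonneg hS0]
      have : |(1/2 : ℝ)| = 1/2 := by norm_num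
      rw [this]
      have := mul_le_mul_of_nonneg_right (abs_coord_le_norm x i) hS0
      nlinarith
    have htri : |Ff u i x| ≤ |pderiv' i u x * Vf u x| + |(1/2 : ℝ) * (x i * S)| := by
      have := abs_add_le (pderiv' i u x * Vf u x) (-((1/2 : ℝ) * (x i * S)))
      simpa [Ff, sub_eq_add_neg, hSdef] using this
    have hxS : 0 ≤ ‖x‖ * S := mul_nonneg (norm_nonneg _) hS0
    nlinarith
  have key : ∀ i : Fin n, |pderiv' i (wR η R) x * Ff u i x| ≤ (4*M*((n:ℝ)+1)) * S := by
    intro i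
    rcases le_or_gt ‖x‖ (2*R) with hx | hx
    · have h2 : |fderiv ℝ η (R⁻¹ • x) (EuclideanSpace.single i 1)| ≤ M := by
        calc |fderiv ℝ η (R⁻¹ • x) (EuclideanSpace.single i 1)|
            ≤ ‖fderiv ℝ η (R⁻¹ • x)‖ * ‖(EuclideanSpace.single i (1:ℝ))‖ :=
          (fderiv ℝ η (R⁻¹ • x)).le_opNorm _
        _ = ‖fderiv ℝ η (R⁻¹ • x)‖ := by rw [EuclideanSpace.norm_single]; simp
        _ ≤ M := hM _
      have h1 : |η (R⁻¹ • x)| ≤ 1 := abs_le.2 ⟨by linarith [(hη.2.1 (R⁻¹ • x)).1],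
        (hη.2.1 (R⁻¹ • x)).2⟩
      have hpd : |pderiv' i (wR η R) x| ≤ 2 * (M * R⁻¹) := by
        rw [pderiv_wR hη.1]
        rw [abs_mul, abs_mul, abs_mul]
        have hRi : |R⁻¹| = R⁻¹ := abs_of_pos (inv_pos.2 hR)
        rw [hRi, abs_two]
        have hRi0 : (0:ℝ) ≤ R⁻¹ := (inv_pos.2 hR).le
        have hac := mul_le_mul h1 (mul_le_mul_of_nonneg_left h2 hRi0)
          (mul_nonneg hRi0 (abs_nonneg _)) zero_le_one
        nlinarith [hac]
      have := mul_le_mul hpd (hF i) (abs_nonneg _) (by positivity)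
      rw [← abs_mul] at this
      have hRx : R⁻¹ * ‖x‖ ≤ 2 := by
        rw [inv_mul_le_iff₀ hR]; linarith
      have h3 : (2 * (M * R⁻¹)) * (((n:ℝ)+1) * ‖x‖ * S)
          = (2 * M * ((n:ℝ)+1) * S) * (R⁻¹ * ‖x‖) := by ring
      have h4 : (0:ℝ) ≤ 2 * M * ((n:ℝ)+1) * S := by positivity
      nlinarith [mul_le_mul_of_nonneg_left hRx h4]
    · have hge : (2:ℝ) ≤ ‖R⁻¹ • x‖ := by
        rw [norm_smul, norm_inv, Real.norm_eq_abs, abs_of_pos hR, le_inv_mul_iff₀ hR]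
        linarith
      rw [pderiv_wR hη.1, hη.2.2.2 _ hge]
      simp only [mul_zero, zero_mul, abs_zero]
      positivity
  calc |∑ i, pderiv' i (wR η R) x * Ff u i x| ≤ ∑ i, |pderiv' i (wR η R) x * Ff u i x| :=
    Finset.abs_sum_le_sum_abs _ _
  _ ≤ ∑ _i : Fin n, (4*M*((n:ℝ)+1)) * S := Finset.sum_le_sum fun i _ => key i
  _ = ((n:ℝ) * (4*M*((n:ℝ)+1))) * S := by
    rw [Finset.sum_const, Finset.card_univ, Fintype.card_fin, nsmul_eq_mul]; ring


/-- Identity (4.27): for a `C²` function `u` with `|∇u| ∈ L²(ℝⁿ)`,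
`∫ η_R² (Δu)(x·∇u) = −((n−2)/2)∫ η_R² |∇u|² + ε_R` with `ε_R → 0` as `R → ∞`. -/
theorem cutoff_lap_radial_term (n : ℕ) (hn : 1 ≤ n) (u : En n → ℝ)
    (hu_reg : ContDiff ℝ 2 u)
    (hgrad : MemLp (gradNorm u) 2 volume)
    (η : En n → ℝ) (hη : IsCutoff η) :
    ∃ ε : ℝ → ℝ, Filter.Tendsto ε Filter.atTop (nhds 0) ∧
      ∀ R : ℝ, 0 < R →
        (∫ x : En n, (η (R⁻¹ • x)) ^ 2 * lap u x * ∑ k, x k * pderiv' k u x)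
          = -(((n : ℝ) - 2) / 2) *
              (∫ x : En n, (η (R⁻¹ • x)) ^ 2 * ∑ i, (pderiv' i u x) ^ 2)
            + ε R := by
  have hηcs : HasCompactSupport η := HasCompactSupport.intro (isCompact_closedBall (0:En n) 2)
    (fun x hx => hη.2.2.2 x (by
      simp only [Metric.mem_closedBall, dist_zero_right, not_le] at hx; linarith))
  obtain ⟨M, hM⟩ := (hηcs.fderiv ℝ).exists_bound_of_continuous (hη.1.continuous_fderiv (by simp))
  refine ⟨fun R => ∫ x : En n, ∑ i, pderiv' i (wR η R) x * Ff u i x, ?_, ?_⟩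
  · have hSint : Integrable (Sf u) volume := by
      have h2 := hgrad.integrable_sq
      have he : (fun x => gradNorm u x ^ 2) = Sf u := funext fun x => by
        simp [gradNorm, Sf, Real.sq_sqrt (Finset.sum_nonneg fun i _ => sq_nonneg
          (pderiv' i u x))]
      rwa [he] at h2
    have hbint : Integrable (fun x : En n => ((n:ℝ) * (4*M*((n:ℝ)+1))) * Sf u x) volume :=
      hSint.const_mul _
    have hcont : ∀ R : ℝ, Continuous (fun x : En n => ∑ i, pderiv' i (wR η R) x * Ff u i x) :=
      fun R => continuous_finset_sum _ fun i _ =>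
        (continuous_pderiv ((contDiff_wR hη.1 R).of_le one_le_two) i).mul
          (contDiff_Ff hu_reg i).continuous
    have hmeas : ∀ᶠ R in (atTop : Filter ℝ), AEStronglyMeasurable
        (fun x : En n => ∑ i, pderiv' i (wR η R) x * Ff u i x) volume :=
      Eventually.of_forall fun R => (hcont R).aestronglyMeasurable
    have hbd : ∀ᶠ R in (atTop : Filter ℝ), ∀ᵐ x : En n,
        ‖∑ i, pderiv' i (wR η R) x * Ff u i x‖
          ≤ ((n:ℝ) * (4*M*((n:ℝ)+1))) * Sf u x := by
      filter_upwards [eventually_gt_atTop 0] with R hR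
      exact Eventually.of_forall fun x => by
        rw [Real.norm_eq_abs]; exact hfun_bound hη hu_reg hM hR x
    have hlim : ∀ᵐ x : En n, Tendsto (fun R => ∑ i, pderiv' i (wR η R) x * Ff u i x)
        atTop (nhds 0) := by
      refine Eventually.of_forall fun x => ?_
      have hev : ∀ᶠ R in (atTop : Filter ℝ),
          (∑ i, pderiv' i (wR η R) x * Ff u i x) = 0 := by
        filter_upwards [eventually_gt_atTop ‖x‖] with R hRx
        have hR0 : 0 < R := lt_of_le_of_lt (norm_nonneg x) hRx
        have hzero : ∀ i, pderiv' i (wR η R) x = 0 := by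
          intro i
          have heq : wR η R =ᶠ[nhds x] fun _ => (1:ℝ) := by
            have hball : Metric.ball (0:En n) R ∈ nhds x :=
              (Metric.isOpen_ball).mem_nhds (by
                simpa [Metric.mem_ball, dist_zero_right] using hRx)
            filter_upwards [hball] with y hy
            have hy' : ‖y‖ < R := by simpa [dist_zero_right] using hy
            have h1 : ‖R⁻¹ • y‖ ≤ 1 := by
              rw [norm_smul, norm_inv, Real.norm_eq_abs, abs_of_pos hR0,
                inv_mul_le_iff₀ hR0]
              linarith
            simp [wR, hη.2.2.1 _ h1]
          show fderiv ℝ (wR η R) x _ = 0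
          rw [heq.fderiv_eq]
          simp
        simp [hzero]
      exact Tendsto.congr' (hev.mono fun R h => h.symm) tendsto_const_nhds
    have hdct := tendsto_integral_filter_of_dominated_convergence (μ := volume)
      (fun x : En n => ((n:ℝ) * (4*M*((n:ℝ)+1))) * Sf u x) hmeas hbd hbint hlim
    simpa using hdct
  · intro R hR
    have h := integral_identity (u := u) hη hu_reg hR
    simpa [wR, Vf, Sf] using h
end
end
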